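/- Let (H_i)_{i=1}^{n} be Hilbert spaces and for each i < j let T_{i,j} : H_i → H_j be bounded linear operators with ‖T_{i,j}‖ ≤ 1. Suppose there are nonnegative reals w_1 < w_2 < ... < w_n and a constant C such that for all i < j < k, ‖T_{j,k} ∘ T_{i,j} - T_{i,k}‖ ≤ C² (w_j - w_i)(w_k - w_j). Then ‖T_{n-1,n} ∘ T_{n-2,n-1} ∘ ⋯ ∘ T_{1,2} - T_{1,n}‖ ≤ (C²/2)·(w_n - w_1)². -/

import Mathlib

/-!
Induction on the length of the chain. Writing `a = w (i+n) - w i` and `b = w (i+n+1) - w (i+n)`,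
the contraction `T (i+n) (i+n+1)` does not enlarge the error accumulated so far, and the new
three-point error is at most `C² a b`; the bound survives the step because
`C²a²/2 + C²ab ≤ C²(a+b)²/2`.
-/

/-- Composition of the operators between consecutive indices:
`opChain T i k = T_{i+k-1,i+k} ∘ ⋯ ∘ T_{i,i+1} : H i →L H (i+k)`. -/
def opChain {H : ℕ → Type*} [∀ i, NormedAddCommGroup (H i)]
    [∀ i, InnerProductSpace ℝ (H i)]
    (T : ∀ i j : ℕ, H i →L[ℝ] H j) (i : ℕ) : ∀ k : ℕ, H i →L[ℝ] H (i + k)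
  | 0 => ContinuousLinearMap.id ℝ (H i)
  | (k + 1) => (T (i + k) (i + k + 1)).comp (opChain T i k)

section opChain

variable {H : ℕ → Type*} [∀ i, NormedAddCommGroup (H i)] [∀ i, InnerProductSpace ℝ (H i)]
  (T : ∀ i j : ℕ, H i →L[ℝ] H j)

theorem opChain_one (i : ℕ) : opChain T i 1 = T i (i + 1) := rfl

theorem opChain_succ_sub (i n : ℕ) :
    opChain T i (n + 1) - T i (i + (n + 1)) =
      (T (i + n) (i + n + 1)).comp (opChain T i n - T i (i + n)) +
        ((T (i + n) (i + n + 1)).comp (T i (i + n)) - T i (i + n + 1)) := by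
  rw [ContinuousLinearMap.comp_sub]
  exact (sub_add_sub_cancel _ _ _).symm

theorem norm_opChain_succ_sub_le {i n : ℕ} (hT : ‖T (i + n) (i + n + 1)‖ ≤ 1) :
    ‖opChain T i (n + 1) - T i (i + (n + 1))‖ ≤
      ‖opChain T i n - T i (i + n)‖ +
        ‖(T (i + n) (i + n + 1)).comp (T i (i + n)) - T i (i + n + 1)‖ := by
  rw [opChain_succ_sub]
  refine (norm_add_le _ _).trans (add_le_add_left ?_ _)
  calc ‖(T (i + n) (i + n + 1)).comp (opChain T i n - T i (i + n))‖
      ≤ ‖T (i + n) (i + n + 1)‖ * ‖opChain T i n - T i (i + n)‖ :=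
        ContinuousLinearMap.opNorm_comp_le _ _
    _ ≤ ‖opChain T i n - T i (i + n)‖ := mul_le_of_le_one_left (norm_nonneg _) hT

end opChain

theorem half_mul_sq_add_mul_le {α : Type*} [Field α] [LinearOrder α] [IsStrictOrderedRing α]
    {c : α} (hc : 0 ≤ c) (a b : α) : c / 2 * a ^ 2 + c * a * b ≤ c / 2 * (a + b) ^ 2 := by
  nlinarith [mul_nonneg hc (sq_nonneg b)]

theorem stmt2_general {H : ℕ → Type*} [∀ i, NormedAddCommGroup (H i)]
    [∀ i, InnerProductSpace ℝ (H i)]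
    (T : ∀ i j : ℕ, H i →L[ℝ] H j) (w : ℕ → ℝ) (C : ℝ)
    (hnorm : ∀ i j : ℕ, i < j → ‖T i j‖ ≤ 1)
    (hcomp : ∀ i j k : ℕ, i < j → j < k →
      ‖(T j k).comp (T i j) - T i k‖ ≤ C ^ 2 * (w j - w i) * (w k - w j)) :
    ∀ i n : ℕ, 1 ≤ n →
      ‖opChain T i n - T i (i + n)‖ ≤ C ^ 2 / 2 * (w (i + n) - w i) ^ 2 := by
  intro i n hn
  induction n, hn using Nat.le_induction with
  | base => simp only [opChain_one, sub_self, norm_zero]; positivity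
  | succ n hn ih =>
    calc ‖opChain T i (n + 1) - T i (i + (n + 1))‖
        ≤ C ^ 2 / 2 * (w (i + n) - w i) ^ 2 +
            C ^ 2 * (w (i + n) - w i) * (w (i + n + 1) - w (i + n)) :=
          (norm_opChain_succ_sub_le T (hnorm _ _ (by omega))).trans
            (add_le_add ih (hcomp _ _ _ (by omega) (by omega)))
      _ ≤ C ^ 2 / 2 * ((w (i + n) - w i) + (w (i + n + 1) - w (i + n))) ^ 2 :=
          half_mul_sq_add_mul_le (sq_nonneg C) _ _
      _ = C ^ 2 / 2 * (w (i + (n + 1)) - w i) ^ 2 := by rw [← add_assoc]; ring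

/-- if `‖T i j‖ ≤ 1` and the three-point composition discrepancy is bounded by
`C² (w j - w i)(w k - w j)`, then the composition along consecutive points deviates from the
direct operator by at most `(C²/2)(w (i+n) - w i)²`. -/
theorem stmt2 {H : ℕ → Type*} [∀ i, NormedAddCommGroup (H i)]
    [∀ i, InnerProductSpace ℝ (H i)] [∀ i, CompleteSpace (H i)]
    (T : ∀ i j : ℕ, H i →L[ℝ] H j) (w : ℕ → ℝ) (C : ℝ) (hC : 0 ≤ C)
    (hmono : StrictMono w) (hw0 : 0 ≤ w 0)
    (hnorm : ∀ i j : ℕ, i < j → ‖T i j‖ ≤ 1)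
    (hcomp : ∀ i j k : ℕ, i < j → j < k →
      ‖(T j k).comp (T i j) - T i k‖ ≤ C ^ 2 * (w j - w i) * (w k - w j)) :
    ∀ i n : ℕ, 1 ≤ n →
      ‖opChain T i n - T i (i + n)‖ ≤ C ^ 2 / 2 * (w (i + n) - w i) ^ 2 :=
  stmt2_general T w C hnorm hcomp
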